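/- arXiv:1106.0072 — 3 statements merged into one kernel-verified Lean document; each statement's English description precedes it below -/
import Mathlib

section
/- Let R be a commutative ring with identity that is not a local ring and in which every element is the sum of an idempotent and a unit (i.e., R is a clean ring), and let G = Γ(R). Then the following are equivalent: (1) G is a bipartite graph; (2) G is a complete bipartite graph; (3) R is isomorphic to R₁ × R₂ where each Rᵢ is a local ring. -/
/-!
Three nonzero pairwise orthogonal idempotents `e, f, g` give a triangle `1 - e, 1 - f, 1 - g` in
`Γ(R)`, since `1 * (1 - e) + e * (1 - f) = 1 - e * f`. Hence, when `Γ(R)` is bipartite, two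
nonzero orthogonal idempotents always sum to `1`. In a clean ring this makes `R ⧸ (e)` local for
every nontrivial idempotent `e`: write `x = f + v`; modulo `e` the idempotent `f` agrees with
`f * (1 - e)`, which is `0` or `1 - e`, so `x` or `1 - x` is a unit there. A clean ring without
nontrivial idempotents is local, so a non-local one is `R ⧸ (e) × R ⧸ (1 - e)` with local factors.
Conversely, in a product of two local rings the vertices of `Γ` are the elements with exactly one
unit coordinate, and two of them are comaximal iff their unit coordinates differ.
-/

universe u

/-- The co-maximal graph `Ω(R)`: vertices are the elements of `R`, with distinct `x`, `y`
adjacent iff `Rx + Ry = R`. -/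
def comaximalGraph (R : Type*) [CommRing R] : SimpleGraph R where
  Adj x y := x ≠ y ∧ Ideal.span {x} ⊔ Ideal.span {y} = ⊤
  symm := ⟨fun _ _ ⟨h1, h2⟩ => ⟨h1.symm, by rwa [sup_comm]⟩⟩
  loopless := ⟨fun _ ⟨h, _⟩ => h rfl⟩

/-- Vertices of `Γ(R)`: the elements of `R \ (U(R) ∪ J(R))`. -/
def GammaVert (R : Type*) [CommRing R] : Type _ :=
  {x : R // ¬IsUnit x ∧ x ∉ (⊥ : Ideal R).jacobson}

/-- The graph `Γ(R)` induced on `R \ (U(R) ∪ J(R))`: distinct vertices `x`, `y` are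
adjacent iff `Rx + Ry = R`. -/
def Gamma (R : Type*) [CommRing R] : SimpleGraph (GammaVert R) where
  Adj a b := a ≠ b ∧ Ideal.span {a.1} ⊔ Ideal.span {b.1} = ⊤
  symm := ⟨fun _ _ ⟨h1, h2⟩ => ⟨h1.symm, by rwa [sup_comm]⟩⟩
  loopless := ⟨fun _ ⟨h, _⟩ => h rfl⟩

/-- Vertices of `Γ_r(R)`: the principal ideals `Rx` for `x ∈ R \ (U(R) ∪ J(R))`. -/
def GammaRVert (R : Type*) [CommRing R] : Type _ :=
  {I : Ideal R // ∃ x : R, ¬IsUnit x ∧ x ∉ (⊥ : Ideal R).jacobson ∧ I = Ideal.span {x}}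

/-- The graph `Γ_r(R)` on `{Rx | x ∈ R \ (U(R) ∪ J(R))}`: distinct vertices `Rx`, `Ry`
are adjacent iff `Rx + Ry = R`. -/
def GammaR (R : Type*) [CommRing R] : SimpleGraph (GammaRVert R) where
  Adj I J := I ≠ J ∧ I.1 ⊔ J.1 = ⊤
  symm := ⟨fun _ _ ⟨h1, h2⟩ => ⟨h1.symm, by rwa [sup_comm]⟩⟩
  loopless := ⟨fun _ ⟨h, _⟩ => h rfl⟩

/-- A simple graph is a split graph if its vertex set is the disjoint union of a set
inducing a complete graph and an independent set. -/
def IsSplitGraph {V : Type*} (G : SimpleGraph V) : Prop :=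
  ∃ K D : Set V, K ∪ D = Set.univ ∧ K ∩ D = ∅ ∧
    (∀ x ∈ K, ∀ y ∈ K, x ≠ y → G.Adj x y) ∧
    (∀ x ∈ D, ∀ y ∈ D, ¬G.Adj x y)

/-- A simple graph is bipartite if its vertex set is the disjoint union of two sets
such that every edge goes between them. -/
def IsBipartiteGraph {V : Type*} (G : SimpleGraph V) : Prop :=
  ∃ A B : Set V, A ∪ B = Set.univ ∧ A ∩ B = ∅ ∧
    ∀ x y, G.Adj x y → (x ∈ A ∧ y ∈ B) ∨ (x ∈ B ∧ y ∈ A)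

/-- A simple graph is complete bipartite if its vertex set is the disjoint union of two
sets such that two vertices are adjacent iff they lie in different parts. -/
def IsCompleteBipartiteGraph {V : Type*} (G : SimpleGraph V) : Prop :=
  ∃ A B : Set V, A ∪ B = Set.univ ∧ A ∩ B = ∅ ∧
    ∀ x y, G.Adj x y ↔ ((x ∈ A ∧ y ∈ B) ∨ (x ∈ B ∧ y ∈ A))

def IsCleanRing (R : Type*) [CommRing R] : Prop :=
  ∀ r : R, ∃ e v : R, IsIdempotentElem e ∧ IsUnit v ∧ r = e + v

section Graphs

variable {V W : Type*} {G : SimpleGraph V} {H : SimpleGraph W}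

lemma IsBipartiteGraph.cliqueFree_three (hG : IsBipartiteGraph G) : G.CliqueFree 3 := by
  classical
  obtain ⟨A, B, -, hdisj, hadj⟩ := hG
  have hB : ∀ v ∈ B, v ∉ A := fun v hvB hvA => (hdisj ▸ ⟨hvA, hvB⟩ : v ∈ (∅ : Set V))
  refine SimpleGraph.Colorable.cliqueFree
    ⟨.mk (fun v => if v ∈ A then (0 : Fin 2) else 1) fun hvw => ?_⟩ (by norm_num)
  rcases hadj _ _ hvw with ⟨hv, hw⟩ | ⟨hv, hw⟩
  · simp [hv, hB _ hw]
  · simp [hw, hB _ hv]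

lemma IsCompleteBipartiteGraph.isBipartiteGraph (hG : IsCompleteBipartiteGraph G) :
    IsBipartiteGraph G :=
  let ⟨A, B, hcover, hdisj, hadj⟩ := hG
  ⟨A, B, hcover, hdisj, fun x y => (hadj x y).mp⟩

lemma isCompleteBipartiteGraph_of_adj_iff_xor (p : V → Prop)
    (hadj : ∀ x y, G.Adj x y ↔ Xor (p x) (p y)) : IsCompleteBipartiteGraph G :=
  ⟨{x | p x}, {x | ¬p x}, Set.union_compl_self _, Set.inter_compl_self _,
    fun x y => (hadj x y).trans (by simp only [Set.mem_ofPred_eq, Xor]; tauto)⟩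

lemma IsCompleteBipartiteGraph.of_iso (φ : G ≃g H) (hH : IsCompleteBipartiteGraph H) :
    IsCompleteBipartiteGraph G := by
  obtain ⟨A, B, hcover, hdisj, hadj⟩ := hH
  refine ⟨φ ⁻¹' A, φ ⁻¹' B, by rw [← Set.preimage_union, hcover, Set.preimage_univ],
    by rw [← Set.preimage_inter, hdisj, Set.preimage_empty], fun x y => ?_⟩
  rw [← φ.map_adj_iff, hadj]
  rfl

end Graphs

section Rings

variable {R S : Type*} [CommRing R] [CommRing S]

lemma IsIdempotentElem.eq_zero_of_mem_jacobson_bot {e : R} (he : IsIdempotentElem e)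
    (hJ : e ∈ (⊥ : Ideal R).jacobson) : e = 0 := by
  have hunit : IsUnit (1 - e) := by
    simpa [sub_eq_neg_add, add_comm] using Ideal.mem_jacobson_bot.mp hJ (-1)
  simpa using (IsIdempotentElem.iff_eq_one_of_isUnit hunit).mp he.one_sub

lemma IsIdempotentElem.not_isUnit_and_notMem_jacobson_bot {e : R} (he : IsIdempotentElem e)
    (h0 : e ≠ 0) (h1 : e ≠ 1) : ¬IsUnit e ∧ e ∉ (⊥ : Ideal R).jacobson :=
  ⟨fun hu => h1 ((IsIdempotentElem.iff_eq_one_of_isUnit hu).mp he),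
    fun hJ => h0 (he.eq_zero_of_mem_jacobson_bot hJ)⟩

lemma isCoprime_one_sub_of_mul_eq_zero {e f : R} (hef : e * f = 0) :
    IsCoprime (1 - e) (1 - f) :=
  ⟨1, e, by linear_combination -hef⟩

lemma Prod.isCoprime_iff {A B : Type*} [CommRing A] [CommRing B] {x y : A × B} :
    IsCoprime x y ↔ IsCoprime x.1 y.1 ∧ IsCoprime x.2 y.2 := by
  refine ⟨fun h => ⟨h.map (RingHom.fst A B), h.map (RingHom.snd A B)⟩, ?_⟩
  rintro ⟨⟨a, b, hab⟩, ⟨c, d, hcd⟩⟩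
  exact ⟨(a, c), (b, d), Prod.ext hab hcd⟩

lemma Prod.mem_jacobson_bot_iff {A B : Type*} [CommRing A] [CommRing B] {x : A × B} :
    x ∈ (⊥ : Ideal (A × B)).jacobson ↔
      x.1 ∈ (⊥ : Ideal A).jacobson ∧ x.2 ∈ (⊥ : Ideal B).jacobson := by
  simp only [Ideal.mem_jacobson_bot, Prod.forall, Prod.isUnit_iff, Prod.fst_add, Prod.snd_add,
    Prod.fst_mul, Prod.snd_mul, Prod.fst_one, Prod.snd_one]
  exact ⟨fun h => ⟨fun a => (h a 0).1, fun b => (h 0 b).2⟩, fun h a b => ⟨h.1 a, h.2 b⟩⟩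

lemma RingEquiv.isCoprime_map_iff (φ : R ≃+* S) {x y : R} :
    IsCoprime (φ x) (φ y) ↔ IsCoprime x y :=
  ⟨fun h => by simpa using h.map φ.symm.toRingHom, fun h => h.map φ.toRingHom⟩

lemma RingEquiv.mem_jacobson_bot_map_iff (φ : R ≃+* S) {x : R} :
    φ x ∈ (⊥ : Ideal S).jacobson ↔ x ∈ (⊥ : Ideal R).jacobson := by
  simp only [Ideal.mem_jacobson_bot, φ.surjective.forall, ← map_mul, ← map_one φ, ← map_add,
    isUnit_map_iff]

end Rings

namespace IsLocalRing

variable {R : Type*} [CommRing R] [IsLocalRing R]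

lemma mem_jacobson_bot_iff {x : R} : x ∈ (⊥ : Ideal R).jacobson ↔ ¬IsUnit x := by
  rw [jacobson_eq_maximalIdeal ⊥ bot_ne_top, mem_maximalIdeal, mem_nonunits_iff]

lemma isCoprime_iff {x y : R} : IsCoprime x y ↔ IsUnit x ∨ IsUnit y := by
  refine ⟨fun ⟨a, b, h⟩ => (isUnit_or_isUnit_of_add_one h).imp
    isUnit_of_mul_isUnit_right isUnit_of_mul_isUnit_right, ?_⟩
  rintro (⟨u, rfl⟩ | ⟨u, rfl⟩)
  · exact ⟨↑u⁻¹, 0, by simp⟩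
  · exact ⟨0, ↑u⁻¹, by simp⟩

end IsLocalRing

namespace Gamma

variable {R S : Type*} [CommRing R] [CommRing S]

lemma adj_iff {a b : GammaVert R} : (Gamma R).Adj a b ↔ IsCoprime a.1 b.1 := by
  change a ≠ b ∧ _ ↔ _
  rw [← Ideal.isCoprime_iff_sup_eq, Ideal.isCoprime_span_singleton_iff]
  refine and_iff_right_of_imp fun h hab => ?_
  subst hab
  exact a.2.1 (isCoprime_self.mp h)

def isoOfRingEquiv (φ : R ≃+* S) : Gamma R ≃g Gamma S where
  toEquiv := φ.toEquiv.subtypeEquiv fun x => by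
    rw [RingEquiv.toEquiv_eq_coe, RingEquiv.coe_toEquiv, isUnit_map_iff,
      φ.mem_jacobson_bot_map_iff]
  map_rel_iff' := by
    intro a b
    simp only [adj_iff]
    exact φ.isCoprime_map_iff

lemma not_cliqueFree_three_of_orthogonal {e f g : R} (he : IsIdempotentElem e)
    (hf : IsIdempotentElem f) (hg : IsIdempotentElem g) (hef : e * f = 0) (heg : e * g = 0)
    (hfg : f * g = 0) (he0 : e ≠ 0) (hf0 : f ≠ 0) (hg0 : g ≠ 0) : ¬(Gamma R).CliqueFree 3 := by
  have vertex : ∀ {x y : R}, IsIdempotentElem x → x * y = 0 → x ≠ 0 → y ≠ 0 →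
      ¬IsUnit (1 - x) ∧ 1 - x ∉ (⊥ : Ideal R).jacobson := fun hx hxy hx0 hy0 =>
    hx.one_sub.not_isUnit_and_notMem_jacobson_bot
      (sub_ne_zero.mpr fun h => hy0 (by rwa [← h, one_mul] at hxy))
      (fun h => hx0 (sub_eq_self.mp h))
  classical
  intro hfree
  refine hfree {⟨1 - e, vertex he hef he0 hf0⟩, ⟨1 - f, vertex hf hfg hf0 hg0⟩,
    ⟨1 - g, vertex hg ((mul_comm g e).trans heg) hg0 he0⟩}
    (SimpleGraph.is3Clique_triple_iff.mpr ⟨?_, ?_, ?_⟩) <;>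
  exact adj_iff.mpr (isCoprime_one_sub_of_mul_eq_zero ‹_›)

lemma add_eq_one_of_cliqueFree_three (hG : (Gamma R).CliqueFree 3) {e f : R}
    (he : IsIdempotentElem e) (hf : IsIdempotentElem f) (hef : e * f = 0) (he0 : e ≠ 0)
    (hf0 : f ≠ 0) : e + f = 1 := by
  by_contra hsum
  have hg : IsIdempotentElem (1 - e - f) := by
    unfold IsIdempotentElem; linear_combination he.eq + hf.eq + 2 * hef
  exact not_cliqueFree_three_of_orthogonal he hf hg hef
    (by linear_combination -he.eq - hef) (by linear_combination -hf.eq - hef) he0 hf0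
    (fun h => hsum (by linear_combination -h)) hG

lemma isCompleteBipartiteGraph_prod (A B : Type*) [CommRing A] [CommRing B] [IsLocalRing A]
    [IsLocalRing B] : IsCompleteBipartiteGraph (Gamma (A × B)) := by
  have hvertex : ∀ x : GammaVert (A × B), IsUnit x.1.2 ↔ ¬IsUnit x.1.1 := by
    rintro ⟨x, hunit, hJ⟩
    rw [Prod.isUnit_iff] at hunit
    rw [Prod.mem_jacobson_bot_iff, IsLocalRing.mem_jacobson_bot_iff,
      IsLocalRing.mem_jacobson_bot_iff] at hJ
    tauto
  refine isCompleteBipartiteGraph_of_adj_iff_xor (fun x => IsUnit x.1.1) fun x y => ?_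
  rw [adj_iff, Prod.isCoprime_iff, IsLocalRing.isCoprime_iff, IsLocalRing.isCoprime_iff,
    hvertex x, hvertex y, Xor]
  tauto

end Gamma

namespace IsCleanRing

variable {R : Type*} [CommRing R]

lemma isLocalRing [Nontrivial R] (hR : IsCleanRing R)
    (hidem : ∀ e : R, IsIdempotentElem e → e = 0 ∨ e = 1) : IsLocalRing R := by
  refine IsLocalRing.of_isUnit_or_isUnit_one_sub_self fun x => ?_
  obtain ⟨e, v, he, hv, rfl⟩ := hR x
  rcases hidem e he with rfl | rfl
  · exact .inl (by rwa [zero_add])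
  · exact .inr (by rwa [sub_add_cancel_left, IsUnit.neg_iff])

lemma isLocalRing_quotient_span (hR : IsCleanRing R) (hG : (Gamma R).CliqueFree 3) {e : R}
    (he : IsIdempotentElem e) (he0 : e ≠ 0) (he1 : e ≠ 1) :
    IsLocalRing (R ⧸ Ideal.span {e}) := by
  have : Nontrivial (R ⧸ Ideal.span {e}) := Ideal.Quotient.nontrivial_iff.mpr <| by
    rw [Ne, Ideal.span_singleton_eq_top]
    exact (he.not_isUnit_and_notMem_jacobson_bot he0 he1).1
  refine IsLocalRing.of_isUnit_or_isUnit_one_sub_self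
    (Ideal.Quotient.mk_surjective.forall.mpr fun x => ?_)
  obtain ⟨f, v, hf, hv, rfl⟩ := hR x
  have hmk : Ideal.Quotient.mk (Ideal.span {e}) (f + v) =
      Ideal.Quotient.mk _ (f * (1 - e)) + Ideal.Quotient.mk _ v := by
    rw [← map_add, Ideal.Quotient.eq]
    exact Ideal.mem_span_singleton'.mpr ⟨f, by ring⟩
  rcases eq_or_ne (f * (1 - e)) 0 with hf0 | hf0
  · left
    rw [hmk, hf0, map_zero, zero_add]
    exact hv.map _
  · right
    have hsum := Gamma.add_eq_one_of_cliqueFree_three hG he (hf.mul he.one_sub)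
      (by linear_combination -f * he.eq) he0 hf0
    rw [hmk, show f * (1 - e) = 1 - e by linear_combination hsum, map_sub, map_one,
      Ideal.Quotient.eq_zero_iff_mem.mpr (Ideal.mem_span_singleton_self e), sub_zero,
      sub_add_cancel_left]
    exact (hv.map _).neg

lemma exists_ringEquiv_prod_isLocalRing {R : Type u} [CommRing R] [Nontrivial R]
    (hR : IsCleanRing R) (hnl : ¬IsLocalRing R) (hG : (Gamma R).CliqueFree 3) :
    ∃ (R₁ R₂ : Type u) (_ : CommRing R₁) (_ : CommRing R₂),
      IsLocalRing R₁ ∧ IsLocalRing R₂ ∧ Nonempty (R ≃+* (R₁ × R₂)) := by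
  obtain ⟨e, he, he0, he1⟩ : ∃ e : R, IsIdempotentElem e ∧ e ≠ 0 ∧ e ≠ 1 := by
    by_contra! h
    exact hnl (hR.isLocalRing fun e he => or_iff_not_imp_left.mpr (h e he))
  exact ⟨_, _, _, _, hR.isLocalRing_quotient_span hG he he0 he1,
    hR.isLocalRing_quotient_span hG he.one_sub (sub_ne_zero.mpr he1.symm)
      (fun h => he0 (sub_eq_self.mp h)),
    ⟨(AlgEquiv.prodQuotientOfIsIdempotentElem R he he.one_sub (add_sub_cancel e 1)
      he.mul_one_sub_self).toRingEquiv⟩⟩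

end IsCleanRing

/-- Corollary 3.3: for a non-local commutative clean (exchange) ring `R`, the graph
`Γ(R)` is bipartite iff it is complete bipartite, iff `R ≅ R₁ × R₂` with each `Rᵢ`
a local ring. -/
theorem gamma_bipartite_tfae_of_clean (R : Type u) [CommRing R] [Nontrivial R]
    (h : ¬IsLocalRing R)
    (hclean : ∀ r : R, ∃ e v : R, IsIdempotentElem e ∧ IsUnit v ∧ r = e + v) :
    (IsBipartiteGraph (Gamma R) ↔ IsCompleteBipartiteGraph (Gamma R)) ∧
    (IsCompleteBipartiteGraph (Gamma R) ↔
      (∃ (R₁ R₂ : Type u) (_ : CommRing R₁) (_ : CommRing R₂),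
        IsLocalRing R₁ ∧ IsLocalRing R₂ ∧ Nonempty (R ≃+* (R₁ × R₂)))) := by
  have of_bipartite (hB : IsBipartiteGraph (Gamma R)) :
      ∃ (R₁ R₂ : Type u) (_ : CommRing R₁) (_ : CommRing R₂),
        IsLocalRing R₁ ∧ IsLocalRing R₂ ∧ Nonempty (R ≃+* (R₁ × R₂)) :=
    IsCleanRing.exists_ringEquiv_prod_isLocalRing hclean h hB.cliqueFree_three
  have to_completeBipartite : (∃ (R₁ R₂ : Type u) (_ : CommRing R₁) (_ : CommRing R₂),
      IsLocalRing R₁ ∧ IsLocalRing R₂ ∧ Nonempty (R ≃+* (R₁ × R₂))) →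
      IsCompleteBipartiteGraph (Gamma R) := by
    rintro ⟨R₁, R₂, _, _, _, _, ⟨φ⟩⟩
    exact (Gamma.isCompleteBipartiteGraph_prod R₁ R₂).of_iso (Gamma.isoOfRingEquiv φ)
  exact ⟨⟨fun hB => to_completeBipartite (of_bipartite hB), fun hC => hC.isBipartiteGraph⟩,
    ⟨fun hC => of_bipartite hC.isBipartiteGraph, to_completeBipartite⟩⟩
end

section
/- Let R be a commutative ring with identity and let a, x, b be pairwise distinct vertices of Γ(R) such that a is adjacent to x and x is adjacent to b. If a·b + x is not a unit of R, then a·b + x is a vertex of Γ(R) (i.e., a·b + x ∉ U(R) ∪ J(R)), a·b + x is distinct from a, x and b, and a·b + x is adjacent to both a and b in Γ(R). -/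
universe u

/-!
Write `w = a * b + x`. Modulo `a` it is `x`, and modulo `b` it is also `x`, so `w` is comaximal
with `a` and with `b` because `x` is. An element of the Jacobson radical is comaximal only with
units, and a non-unit is not comaximal with itself; this places `w` outside `J(R)` and makes it
differ from `a` and `b`. Finally `w = x` would force `a * b = 0`, and `x` is comaximal with `a * b`,
so `x` would be a unit.
-/

section IsCoprime

variable {R : Type*} [CommRing R]

theorem isUnit_of_isCoprime_of_mem_jacobson_bot {w y : R} (hw : w ∈ (⊥ : Ideal R).jacobson)
    (h : IsCoprime w y) : IsUnit y := by
  obtain ⟨c, d, hcd⟩ := h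
  have hunit := Ideal.mem_jacobson_bot.mp hw (-c)
  rw [show w * -c + 1 = d * y by linear_combination -hcd] at hunit
  exact isUnit_of_mul_isUnit_right hunit

theorem notMem_jacobson_bot_of_isCoprime {w y : R} (h : IsCoprime w y) (hy : ¬IsUnit y) :
    w ∉ (⊥ : Ideal R).jacobson :=
  fun hw => hy (isUnit_of_isCoprime_of_mem_jacobson_bot hw h)

theorem ne_of_isCoprime_of_not_isUnit {w y : R} (h : IsCoprime w y) (hy : ¬IsUnit y) : w ≠ y := by
  rintro rfl
  exact hy (isCoprime_self.mp h)

theorem mul_add_ne_right_of_isCoprime {a b x : R} (hax : IsCoprime a x) (hxb : IsCoprime x b)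
    (hx : ¬IsUnit x) : a * b + x ≠ x := by
  intro he
  have hab : a * b = 0 := by simpa using he
  have hx0 : IsCoprime x (a * b) := hax.symm.mul_right hxb
  rw [hab] at hx0
  exact hx (isCoprime_zero_right.mp hx0)

end IsCoprime

theorem gamma_adj_iff_isCoprime {R : Type*} [CommRing R] {v w : GammaVert R} :
    (Gamma R).Adj v w ↔ IsCoprime v.1 w.1 := by
  change v ≠ w ∧ _ ↔ _
  rw [← Ideal.isCoprime_iff_sup_eq, Ideal.isCoprime_span_singleton_iff]
  refine ⟨And.right, fun h => ⟨fun hvw => ?_, h⟩⟩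
  exact ne_of_isCoprime_of_not_isUnit h w.2.1 (congrArg Subtype.val hvw)

theorem gamma_path_extension_general {R : Type*} [CommRing R] (a x b : GammaVert R)
    (hax : (Gamma R).Adj a x) (hxb : (Gamma R).Adj x b)
    (h : ¬IsUnit (a.1 * b.1 + x.1)) :
    (¬IsUnit (a.1 * b.1 + x.1) ∧ a.1 * b.1 + x.1 ∉ (⊥ : Ideal R).jacobson) ∧
    a.1 * b.1 + x.1 ≠ a.1 ∧ a.1 * b.1 + x.1 ≠ x.1 ∧ a.1 * b.1 + x.1 ≠ b.1 ∧
    ∃ w : GammaVert R, w.1 = a.1 * b.1 + x.1 ∧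
      (Gamma R).Adj w a ∧ (Gamma R).Adj w b := by
  have hax' := gamma_adj_iff_isCoprime.mp hax
  have hxb' := gamma_adj_iff_isCoprime.mp hxb
  have hwa : IsCoprime (a.1 * b.1 + x.1) a.1 := hax'.symm.mul_add_left_left b.1
  have hwb : IsCoprime (a.1 * b.1 + x.1) b.1 := hxb'.mul_add_right_left a.1
  let w : GammaVert R := ⟨a.1 * b.1 + x.1, h, notMem_jacobson_bot_of_isCoprime hwa a.2.1⟩
  exact ⟨w.2, ne_of_isCoprime_of_not_isUnit hwa a.2.1,
    mul_add_ne_right_of_isCoprime hax' hxb' x.2.1, ne_of_isCoprime_of_not_isUnit hwb b.2.1,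
    w, rfl, gamma_adj_iff_isCoprime.mpr hwa, gamma_adj_iff_isCoprime.mpr hwb⟩

/-- Lemma 3.7: given a path `a - x - b` in `Γ(R)` with `a`, `x`, `b` pairwise distinct,
if `a*b + x` is not a unit then it is a vertex of `Γ(R)`, distinct from `a`, `x`, `b`,
and adjacent to both `a` and `b`. -/
theorem gamma_path_extension {R : Type*} [CommRing R] (a x b : GammaVert R)
    (hax : (Gamma R).Adj a x) (hxb : (Gamma R).Adj x b) (hab : a ≠ b)
    (h : ¬IsUnit (a.1 * b.1 + x.1)) :
    (¬IsUnit (a.1 * b.1 + x.1) ∧ a.1 * b.1 + x.1 ∉ (⊥ : Ideal R).jacobson) ∧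
    a.1 * b.1 + x.1 ≠ a.1 ∧ a.1 * b.1 + x.1 ≠ x.1 ∧ a.1 * b.1 + x.1 ≠ b.1 ∧
    ∃ w : GammaVert R, w.1 = a.1 * b.1 + x.1 ∧
      (Gamma R).Adj w a ∧ (Gamma R).Adj w b :=
  gamma_path_extension_general a x b hax hxb h
end

section
/- Let R be a commutative ring with identity and let I be an ideal of R contained in the Jacobson radical J(R). Then the quotient map x ↦ x + I induces a graph homomorphism π : Γ(R) → Γ(R/I), and there exists a graph homomorphism s : Γ(R/I) → Γ(R) with π ∘ s equal to the identity on Γ(R/I); that is, Γ(R/I) is a retract of Γ(R). -/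
universe u

/-! Reduction modulo an ideal `I ⊆ J(R)` neither creates nor destroys units, elements of the
Jacobson radical, or comaximal pairs, since every element of `1 + J(R)` is a unit. Hence
`x ↦ x + I` is a graph homomorphism `Γ(R) → Γ(R/I)`, and so is any choice of representatives
`Γ(R/I) → Γ(R)`, which is a section of it: two distinct classes have distinct representatives,
and comaximality lifts. -/

namespace Ideal

variable {R : Type*} [CommRing R] {I : Ideal R}

theorem jacobson_eq_jacobson_bot_of_le (hI : I ≤ (⊥ : Ideal R).jacobson) :
    I.jacobson = (⊥ : Ideal R).jacobson :=
  le_antisymm ((jacobson_mono hI).trans jacobson_idem.le) (jacobson_mono bot_le)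

theorem Quotient.mk_mem_jacobson_bot_iff (hI : I ≤ (⊥ : Ideal R).jacobson) {x : R} :
    Quotient.mk I x ∈ (⊥ : Ideal (R ⧸ I)).jacobson ↔ x ∈ (⊥ : Ideal R).jacobson := by
  rw [← mem_comap, comap_jacobson_of_surjective Quotient.mk_surjective, ← RingHom.ker_eq_comap_bot,
    mk_ker, jacobson_eq_jacobson_bot_of_le hI]

theorem Quotient.isUnit_mk_iff (hI : I ≤ (⊥ : Ideal R).jacobson) {x : R} :
    IsUnit (Quotient.mk I x) ↔ IsUnit x :=
  haveI := isLocalHom_of_le_jacobson_bot I hI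
  isUnit_map_iff (Quotient.mk I) x

theorem Quotient.isCoprime_mk_iff (hI : I ≤ (⊥ : Ideal R).jacobson) {x y : R} :
    IsCoprime (Quotient.mk I x) (Quotient.mk I y) ↔ IsCoprime x y := by
  refine ⟨fun ⟨a, b, hab⟩ => ?_, fun h => h.map _⟩
  obtain ⟨a, rfl⟩ := Quotient.mk_surjective a
  obtain ⟨b, rfl⟩ := Quotient.mk_surjective b
  have hmem : a * x + b * y - 1 ∈ I := by
    rw [← Quotient.eq_zero_iff_mem]
    simpa [sub_eq_zero] using hab
  obtain ⟨u, hu⟩ := isUnit_of_sub_one_mem_jacobson_bot _ (hI hmem)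
  exact ⟨↑u⁻¹ * a, ↑u⁻¹ * b, by rw [mul_assoc, mul_assoc, ← mul_add, ← hu, u.inv_mul]⟩

end Ideal

namespace Gamma

variable {R : Type*} [CommRing R] {I : Ideal R}

theorem adj_iff_isCoprime {a b : GammaVert R} :
    (Gamma R).Adj a b ↔ a ≠ b ∧ IsCoprime a.1 b.1 := by
  rw [← Ideal.isCoprime_span_singleton_iff, Ideal.isCoprime_iff_sup_eq]
  rfl

def quotientMap (hI : I ≤ (⊥ : Ideal R).jacobson) : Gamma R →g Gamma (R ⧸ I) where
  toFun v := ⟨Ideal.Quotient.mk I v.1, fun h => v.2.1 ((Ideal.Quotient.isUnit_mk_iff hI).1 h),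
    fun h => v.2.2 ((Ideal.Quotient.mk_mem_jacobson_bot_iff hI).1 h)⟩
  map_rel' {a b} hab := by
    have hcop := (Ideal.Quotient.isCoprime_mk_iff hI).2 (adj_iff_isCoprime.1 hab).2
    refine adj_iff_isCoprime.2 ⟨fun heq => a.2.1 ?_, hcop⟩
    have hmk : Ideal.Quotient.mk I b.1 = Ideal.Quotient.mk I a.1 := congrArg Subtype.val heq.symm
    rw [hmk, isCoprime_self] at hcop
    exact (Ideal.Quotient.isUnit_mk_iff hI).1 hcop

noncomputable def quotientSection (hI : I ≤ (⊥ : Ideal R).jacobson) :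
    Gamma (R ⧸ I) →g Gamma R where
  toFun w := ⟨Function.surjInv Ideal.Quotient.mk_surjective w.1,
    fun h => w.2.1 (Function.surjInv_eq Ideal.Quotient.mk_surjective w.1 ▸ h.map _),
    fun h => w.2.2 (Function.surjInv_eq Ideal.Quotient.mk_surjective w.1 ▸
      (Ideal.Quotient.mk_mem_jacobson_bot_iff hI).2 h)⟩
  map_rel' {a b} hab := by
    obtain ⟨hne, hcop⟩ := adj_iff_isCoprime.1 hab
    refine adj_iff_isCoprime.2 ⟨fun heq => hne ?_, ?_⟩
    · exact Subtype.ext (Function.injective_surjInv _ (congrArg Subtype.val heq))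
    · rw [← Ideal.Quotient.isCoprime_mk_iff hI]
      simpa only [Function.surjInv_eq] using hcop

theorem quotientMap_quotientSection (hI : I ≤ (⊥ : Ideal R).jacobson) (w : GammaVert (R ⧸ I)) :
    quotientMap hI (quotientSection hI w) = w :=
  Subtype.ext (Function.surjInv_eq _ _)

end Gamma

/-- Proposition 4.2(2): for an ideal `I ⊆ J(R)`, the quotient map `x ↦ x + I` induces
a graph homomorphism `π : Γ(R) → Γ(R/I)` admitting a section `s` with `π ∘ s = id`;
i.e. `Γ(R/I)` is a retract of `Γ(R)`. -/
theorem gamma_quotient_is_retract (R : Type*) [CommRing R] (I : Ideal R)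
    (hI : I ≤ (⊥ : Ideal R).jacobson) :
    ∃ (π : Gamma R →g Gamma (R ⧸ I)) (s : Gamma (R ⧸ I) →g Gamma R),
      (∀ v : GammaVert R, (π v).1 = Ideal.Quotient.mk I v.1) ∧
      ∀ w : GammaVert (R ⧸ I), π (s w) = w :=
  ⟨Gamma.quotientMap hI, Gamma.quotientSection hI, fun _ => rfl,
    Gamma.quotientMap_quotientSection hI⟩
end
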